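/- Suppose the sink Z is nonempty and V∖Z is finite. Then for every a ∈ V and every ρ ∈ SF(Z), the rotor walk with initial location a, sink Z, and initial rotor configuration ρ terminates in finite time, and its final rotor configuration σ(a,Z;ρ) is again a Z-oriented spanning forest of G. -/

import Mathlib

open Classical

universe u

variable {V : Type u}

/-- A rotor mechanism: for each vertex `x`, `τ x` restricts to a bijection of the
neighbor set of `x` having a single orbit. -/
def IsMechanism (G : SimpleGraph V) (τ : V → V → V) : Prop :=
  ∀ x : V, Set.BijOn (τ x) (G.neighborSet x) (G.neighborSet x) ∧
    ∀ y ∈ G.neighborSet x, ∀ z ∈ G.neighborSet x, ∃ i : ℕ, (τ x)^[i] y = z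

/-- One step of the rotor walk with sink `Z`; the walk freezes once it reaches `Z`. -/
noncomputable def rotorStep [DecidableEq V] (τ : V → V → V) (Z : Set V) :
    V × (V → V) → V × (V → V) := fun p =>
  if p.1 ∈ Z then p
  else (τ p.1 (p.2 p.1), Function.update p.2 p.1 (τ p.1 (p.2 p.1)))

/-- The rotor walk with initial location `a`, sink `Z` and initial rotor
configuration `ρ`: position (first component) and rotor configuration
(second component) at time `t`. -/
noncomputable def rotorWalk [DecidableEq V] (τ : V → V → V) (Z : Set V)
    (a : V) (ρ : V → V) (t : ℕ) : V × (V → V) :=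
  (rotorStep τ Z)^[t] (a, ρ)

/-- `Z`-oriented spanning forests of `G`, viewed as rotor configurations,
normalized to be the identity on `Z` (the values on `Z` are inconsequential). -/
def SFset (G : SimpleGraph V) (Z : Set V) : Set (V → V) :=
  {ρ | (∀ x ∉ Z, G.Adj x (ρ x)) ∧ (∀ x : V, ∃ ℓ : ℕ, ρ^[ℓ] x ∈ Z) ∧ ∀ x ∈ Z, ρ x = x}

/-- The eventual value of an eventually-constant sequence. -/
noncomputable def eventualVal (f : ℕ → V) : V :=
  if h : ∃ t : ℕ, ∀ s : ℕ, t ≤ s → f s = f t then f h.choose else f 0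

/-- The final rotor configuration `σ(a, Z; ρ)` of the rotor walk. -/
noncomputable def finalConfig [DecidableEq V] (τ : V → V → V) (Z : Set V)
    (a : V) (ρ : V → V) : V → V :=
  fun x => eventualVal fun t => (rotorWalk τ Z a ρ t).2 x

/-- `ξ_i(a_0, …, a_{i-1}, Z; ρ)`: the rotor configuration after `i` successive
walkers, started at `a_0, …, a_{i-1}`, have performed rotor walks with sink `Z`. -/
noncomputable def xiConfig [DecidableEq V] (τ : V → V → V) (Z : Set V) (av : ℕ → V) :
    ℕ → (V → V) → (V → V)
  | 0, ρ => ρ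
  | i + 1, ρ => finalConfig τ Z (av i) (xiConfig τ Z av i ρ)

/-- The set of times at which the rotor walk (run until it first reaches the
sink `Z`) is at a vertex of `W`; its cardinality is the odometer `u(a,Z;ρ)(W)`. -/
def visitTimes [DecidableEq V] (τ : V → V → V) (Z : Set V) (a : V) (ρ : V → V)
    (W : Set V) : Set ℕ :=
  {t | (rotorWalk τ Z a ρ t).1 ∈ W ∧ ∀ s < t, (rotorWalk τ Z a ρ s).1 ∉ Z}

/-- The event `E_{r,W}(a,Z)`: the rotor walk with initial location `a` and sink `Z`
visits `W` some time after visiting a vertex at graph distance at least `r` from `W`. -/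
def Eset [DecidableEq V] (G : SimpleGraph V) (τ : V → V → V) (r : ℕ) (W : Set V)
    (a : V) (Z : Set V) : Set (V → V) :=
  {ρ | ∃ t₁ t₂ : ℕ, t₁ < t₂ ∧ (∀ s < t₂, (rotorWalk τ Z a ρ s).1 ∉ Z) ∧
    (∀ w ∈ W, r ≤ G.dist w (rotorWalk τ Z a ρ t₁).1) ∧ (rotorWalk τ Z a ρ t₂).1 ∈ W}

/-- The event `D_r` (relative to the set `Z`): there is an oriented path in `ρ`
from a vertex at graph distance exactly `r` from `Z` to a vertex of `Z`. -/
def Dset (G : SimpleGraph V) (Z : Set V) (r : ℕ) : Set (V → V) :=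
  {ρ | ∃ x : V, ∃ ℓ : ℕ, (∀ w ∈ Z, r ≤ G.dist w x) ∧ (∃ w ∈ Z, G.dist w x = r) ∧
    ρ^[ℓ] x ∈ Z}

/-- The transition matrix `P_Z` of simple random walk on `G` killed upon hitting `Z`. -/
noncomputable def killedP (G : SimpleGraph V) [∀ v : V, Fintype (G.neighborSet v)]
    (Z : Set V) : Matrix {x : V // x ∉ Z} {x : V // x ∉ Z} ℝ :=
  fun x y => if G.Adj x.1 y.1 then (1 : ℝ) / (G.degree x.1) else 0

/-- The Green function `((I - P_Z)⁻¹)_{a,x}` of simple random walk killed at `Z`,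
as a function of a pair of vertices (zero if `V ∖ Z` is infinite or `a ∈ Z` or `x ∈ Z`). -/
noncomputable def greenFn (G : SimpleGraph V) [DecidableEq V]
    [∀ v : V, Fintype (G.neighborSet v)] (Z : Set V) (a x : V) : ℝ :=
  if h : ({y : V | y ∉ Z}).Finite ∧ a ∉ Z ∧ x ∉ Z then
    letI : Fintype {y : V // y ∉ Z} := h.1.fintype
    ((1 - killedP G Z)⁻¹) ⟨a, h.2.1⟩ ⟨x, h.2.2⟩
  else 0

/-!
While the walker has not reached `Z`, the rotor at `x` after `k` visits to `x` is `τ_x^k (ρ x)`.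
If the walk never reached `Z`, some vertex of the finite set `V ∖ Z` would be visited infinitely
often; since `τ_x` cycles through all neighbours of `x`, every neighbour of an infinitely visited
vertex is itself infinitely visited, so by connectedness some vertex of `Z` would be visited.

For the final configuration, the invariant is that following the rotors from any vertex leads to
`Z` or to the walker's current position: pointing the rotor at the walker's position `X` to some
`y` and moving the walker to `y` preserves it. Once the walker stops in `Z`, this says the rotors form a
`Z`-oriented forest.
-/

open Function

theorem SimpleGraph.Reachable.mem_of_forall_adj_mem {G : SimpleGraph V} {S : Set V}
    (hS : ∀ x ∈ S, ∀ y, G.Adj x y → y ∈ S) {u v : V} (huv : G.Reachable u v)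
    (hu : u ∈ S) : v ∈ S := by
  obtain ⟨w⟩ := huv
  induction w with
  | nil => exact hu
  | cons hadj _ ih => exact ih (hS _ hu _ hadj)

theorem Set.Finite.exists_infinite_setOf_eq {s : Set V} (hs : s.Finite) {f : ℕ → V}
    (hf : ∀ t, f t ∈ s) : ∃ x, {t | f t = x}.Infinite := by
  have := hs.to_subtype
  obtain ⟨x, hx⟩ := Finite.exists_infinite_fiber fun t => (⟨f t, hf t⟩ : s)
  refine ⟨x, ?_⟩
  simpa [Set.infinite_coe_iff, Set.preimage, Subtype.ext_iff] using hx

theorem exists_iterate_update_mem_insert {α : Type*} [DecidableEq α] {f : α → α} {S : Set α}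
    {a b x : α} (h : ∃ ℓ, f^[ℓ] x ∈ insert a S) :
    ∃ m, (update f a b)^[m] x ∈ insert b S := by
  obtain ⟨ℓ, hℓ⟩ := h
  induction ℓ generalizing x with
  | zero =>
    rcases hℓ with rfl | hx
    · exact ⟨1, by simp⟩
    · exact ⟨0, Or.inr hx⟩
  | succ ℓ ih =>
    by_cases hxa : x = a
    · exact ⟨1, by simp [hxa]⟩
    · obtain ⟨m, hm⟩ := ih (x := f x) (by rwa [← iterate_succ_apply])
      exact ⟨m + 1, by rwa [iterate_succ_apply, update_of_ne hxa]⟩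

theorem eventualVal_eq_of_forall_ge {f : ℕ → V} {T : ℕ} (hT : ∀ s, T ≤ s → f s = f T) :
    eventualVal f = f T := by
  have hex : ∃ t, ∀ s, t ≤ s → f s = f t := ⟨T, hT⟩
  rw [eventualVal, dif_pos hex, ← hex.choose_spec _ (le_max_left _ T), hT _ (le_max_right _ _)]

theorem IsMechanism.infinite_setOf_iterate_eq {G : SimpleGraph V} {τ : V → V → V}
    (hτ : IsMechanism G τ) {x y z : V} (hy : G.Adj x y) (hz : G.Adj x z) :
    {k | (τ x)^[k] z = y}.Infinite := by
  obtain ⟨i, hi⟩ := (hτ x).2 z hz y hy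
  obtain ⟨j, hj⟩ := (hτ x).2 _ ((hτ x).1.mapsTo hy) y hy
  have hper : IsPeriodicPt (τ x) (j + 1) y := by rwa [IsPeriodicPt, IsFixedPt, iterate_succ_apply]
  refine Set.infinite_of_injective_forall_mem (f := fun n => (j + 1) * n + i)
    (fun m n h => by simpa using h) fun n => ?_
  simp only [Set.mem_ofPred_eq, iterate_add_apply, hi]
  exact (hper.mul_const n).eq

section RotorWalk

variable [DecidableEq V] {τ : V → V → V} {Z : Set V}

theorem rotorStep_of_mem {p : V × (V → V)} (h : p.1 ∈ Z) : rotorStep τ Z p = p := if_pos h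

theorem rotorStep_of_notMem {p : V × (V → V)} (h : p.1 ∉ Z) :
    rotorStep τ Z p = (τ p.1 (p.2 p.1), update p.2 p.1 (τ p.1 (p.2 p.1))) := if_neg h

theorem rotorWalk_succ (a : V) (ρ : V → V) (t : ℕ) :
    rotorWalk τ Z a ρ (t + 1) = rotorStep τ Z (rotorWalk τ Z a ρ t) :=
  iterate_succ_apply' _ _ _

theorem rotorWalk_eq_of_le {a : V} {ρ : V → V} {T s : ℕ} (hT : (rotorWalk τ Z a ρ T).1 ∈ Z)
    (hs : T ≤ s) : rotorWalk τ Z a ρ s = rotorWalk τ Z a ρ T := by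
  obtain ⟨k, rfl⟩ := Nat.exists_eq_add_of_le' hs
  exact (iterate_add_apply _ k T _).trans (iterate_fixed (rotorStep_of_mem hT) k)

theorem finalConfig_eq_of_mem {a : V} {ρ : V → V} {T : ℕ}
    (hT : (rotorWalk τ Z a ρ T).1 ∈ Z) : finalConfig τ Z a ρ = (rotorWalk τ Z a ρ T).2 :=
  funext fun _ => eventualVal_eq_of_forall_ge fun _ hs => by rw [rotorWalk_eq_of_le hT hs]

theorem rotorWalk_snd_of_mem (a : V) (ρ : V → V) (t : ℕ) {x : V} (hx : x ∈ Z) :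
    (rotorWalk τ Z a ρ t).2 x = ρ x := by
  refine Iterate.rec (fun p : V × (V → V) => p.2 x = ρ x) rfl (fun p hp => ?_) t
  by_cases hp1 : p.1 ∈ Z
  · rwa [rotorStep_of_mem hp1]
  · rw [rotorStep_of_notMem hp1]
    exact (update_of_ne (ne_of_mem_of_not_mem hx hp1) _ _).trans hp

theorem rotorWalk_adj {G : SimpleGraph V} (hτ : IsMechanism G τ) (a : V) {ρ : V → V}
    (hρ : ∀ x ∉ Z, G.Adj x (ρ x)) (t : ℕ) :
    ∀ x ∉ Z, G.Adj x ((rotorWalk τ Z a ρ t).2 x) := by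
  refine Iterate.rec (fun p : V × (V → V) => ∀ x ∉ Z, G.Adj x (p.2 x)) hρ
    (fun p hp x hx => ?_) t
  by_cases hp1 : p.1 ∈ Z
  · rw [rotorStep_of_mem hp1]; exact hp x hx
  · rw [rotorStep_of_notMem hp1]
    rcases eq_or_ne x p.1 with rfl | hxp
    · simpa using (hτ p.1).1.mapsTo (hp p.1 hx)
    · simpa [update_of_ne hxp] using hp x hx

theorem rotorWalk_exists_iterate_mem_insert (a : V) {ρ : V → V}
    (hρ : ∀ x, ∃ ℓ, ρ^[ℓ] x ∈ Z) (t : ℕ) (x : V) :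
    ∃ ℓ, (rotorWalk τ Z a ρ t).2^[ℓ] x ∈ insert (rotorWalk τ Z a ρ t).1 Z := by
  refine Iterate.rec (fun p : V × (V → V) => ∀ x, ∃ ℓ, p.2^[ℓ] x ∈ insert p.1 Z)
    (fun x => (hρ x).imp fun _ => Or.inr) (fun p hp x => ?_) t x
  by_cases hp1 : p.1 ∈ Z
  · simpa [rotorStep_of_mem hp1] using hp x
  · rw [rotorStep_of_notMem hp1]
    exact exists_iterate_update_mem_insert (hp x)

theorem rotorWalk_snd_eq_iterate_count {a : V} {ρ : V → V} {t : ℕ}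
    (hno : ∀ s < t, (rotorWalk τ Z a ρ s).1 ∉ Z) (x : V) :
    (rotorWalk τ Z a ρ t).2 x =
      (τ x)^[Nat.count (fun s => (rotorWalk τ Z a ρ s).1 = x) t] (ρ x) := by
  induction t with
  | zero => rfl
  | succ t ih =>
    rw [rotorWalk_succ, rotorStep_of_notMem (hno t t.lt_succ_self), Nat.count_succ]
    rcases eq_or_ne (rotorWalk τ Z a ρ t).1 x with hx | hx
    · subst hx
      simp [ih fun s hs => hno s (hs.trans t.lt_succ_self), iterate_succ_apply']
    · simp [hx, update_of_ne hx.symm, ih fun s hs => hno s (hs.trans t.lt_succ_self)]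

theorem rotorWalk_infinite_visits_of_adj {G : SimpleGraph V} (hτ : IsMechanism G τ) {a : V}
    {ρ : V → V} (hρ : ∀ x ∉ Z, G.Adj x (ρ x))
    (hno : ∀ t, (rotorWalk τ Z a ρ t).1 ∉ Z) {x y : V}
    (hx : {t | (rotorWalk τ Z a ρ t).1 = x}.Infinite) (hxy : G.Adj x y) :
    {t | (rotorWalk τ Z a ρ t).1 = y}.Infinite := by
  have hxZ : x ∉ Z := by obtain ⟨t, rfl⟩ := hx.nonempty; exact hno t
  have hleave : ∀ k,
      (rotorWalk τ Z a ρ (Nat.nth (fun s => (rotorWalk τ Z a ρ s).1 = x) k + 1)).1 =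
        (τ x)^[k] (τ x (ρ x)) := by
    intro k
    have hvisit := Nat.nth_mem_of_infinite hx k
    rw [rotorWalk_succ, rotorStep_of_notMem (hno _), hvisit,
      rotorWalk_snd_eq_iterate_count (fun s _ => hno s), Nat.count_nth_of_infinite hx,
      ← iterate_succ_apply' (τ x), iterate_succ_apply]
  refine Set.infinite_of_injOn_mapsTo
    (f := fun k => Nat.nth (fun s => (rotorWalk τ Z a ρ s).1 = x) k + 1)
    (fun m _ n _ h => (Nat.nth_strictMono hx).injective (Nat.succ_injective h))
    (fun k hk => (hleave k).trans hk)
    (hτ.infinite_setOf_iterate_eq hxy ((hτ x).1.mapsTo (hρ x hxZ)))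

theorem rotorWalk_exists_mem_sink {G : SimpleGraph V} (hconn : G.Connected)
    (hτ : IsMechanism G τ) (hZ : Z.Nonempty) (hfin : Zᶜ.Finite) (a : V) {ρ : V → V}
    (hρ : ∀ x ∉ Z, G.Adj x (ρ x)) : ∃ t, (rotorWalk τ Z a ρ t).1 ∈ Z := by
  by_contra! hno
  obtain ⟨x, hx⟩ := hfin.exists_infinite_setOf_eq hno
  obtain ⟨z, hz⟩ := hZ
  have hzvisit : {t | (rotorWalk τ Z a ρ t).1 = z}.Infinite :=
    (hconn x z).mem_of_forall_adj_mem (S := {y | {t | (rotorWalk τ Z a ρ t).1 = y}.Infinite})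
      (fun _ hy _ => rotorWalk_infinite_visits_of_adj hτ hρ hno hy) hx
  obtain ⟨t, ht⟩ := hzvisit.nonempty
  exact hno t (ht ▸ hz)

end RotorWalk

/-- If `Z` is nonempty with `V ∖ Z` finite, then for every `a` and
every `ρ ∈ SF(Z)` the rotor walk terminates in finite time and the final rotor
configuration `σ(a,Z;ρ)` is again a `Z`-oriented spanning forest. -/
theorem stmt3 {V : Type u} [DecidableEq V] (G : SimpleGraph V) (hconn : G.Connected)
    [∀ v : V, Fintype (G.neighborSet v)] (τ : V → V → V) (hτ : IsMechanism G τ)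
    (Z : Set V) (hZ : Z.Nonempty) (hfin : (Zᶜ : Set V).Finite)
    (a : V) (ρ : V → V) (hρ : ρ ∈ SFset G Z) :
    (∃ t : ℕ, (rotorWalk τ Z a ρ t).1 ∈ Z) ∧ finalConfig τ Z a ρ ∈ SFset G Z := by
  obtain ⟨hadj, hreach, hsink⟩ := hρ
  obtain ⟨T, hT⟩ := rotorWalk_exists_mem_sink hconn hτ hZ hfin a hadj
  refine ⟨⟨T, hT⟩, ?_⟩
  rw [finalConfig_eq_of_mem hT]
  refine ⟨rotorWalk_adj hτ a hadj T, fun x => ?_, fun x hx => ?_⟩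
  · simpa [Set.insert_eq_of_mem hT] using
      rotorWalk_exists_iterate_mem_insert (τ := τ) a hreach T x
  · rw [rotorWalk_snd_of_mem a ρ T hx, hsink x hx]
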